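/- arXiv:2502.18346 — 2 statements merged into one kernel-verified Lean document; each statement's English description precedes it below -/
import Mathlib

section
/- For every real q ≥ 1, the function F : [0,1/2] → ℝ defined by F(y) := ∫_0^{1/2} ( x^q |x−y|^q + (1/2−x)^q (1/2−|x−y|)^q ) dx (Lebesgue integral in x) is strictly decreasing on [0, 1/2]; in particular its derivative is negative at every y ∈ (0, 1/2). -/
/-!
Write the integrand as `profile q x |x - y|` with
`profile q x d = x^q d^q + (1/2 - x)^q (1/2 - d)^q`. For `x, d ∈ [0, 1/2]` the `d`-derivative of
the profile is bounded by `q`, so the integrand is `q`-Lipschitz in `y` and differentiable off the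
null set `x = y`; hence we may differentiate under the integral sign. The resulting integrand is
`q (x^q (y - x)^(q-1) - (1/2 - x)^q (1/2 - y + x)^(q-1))` on `(0, y)` and
`q ((1/2 - x)^q (1/2 - x + y)^(q-1) - x^q (x - y)^(q-1))` on `(y, 1/2)`. After reflecting the
subtracted term about the midpoint of its interval, both integrands become pointwise negative:
on `(0, y)` this is monotonicity of `t ↦ t^q`, `t ↦ t^(q-1)`, and on `(y, 1/2)` it is
`c^q d^(q-1) < d^q c^(q-1)` for `c = 1/2 - x < d = c + y`.
-/

open MeasureTheory

noncomputable section

/-- `F(y) = ∫_0^{1/2} ( x^q |x-y|^q + (1/2-x)^q (1/2-|x-y|)^q ) dx`. -/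
def Ffun (q : ℝ) (y : ℝ) : ℝ :=
  ∫ x in Set.Icc (0:ℝ) (1/2),
    (x ^ q * |x - y| ^ q + (1/2 - x) ^ q * (1/2 - |x - y|) ^ q)

open Set intervalIntegral

theorem integral_sub_neg_of_lt_reflect {f g : ℝ → ℝ} {a b : ℝ} (hab : a < b)
    (hf : IntervalIntegrable f volume a b) (hg : IntervalIntegrable g volume a b)
    (hlt : ∀ x ∈ Ioo a b, f x < g (a + b - x)) :
    ∫ x in a..b, (f x - g x) < 0 := by
  have hg' : IntervalIntegrable (fun x => g (a + b - x)) volume a b := by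
    simpa using (hg.comp_sub_left (a + b)).symm
  have hrefl : ∫ x in a..b, g (a + b - x) = ∫ x in a..b, g x := by
    simp [intervalIntegral.integral_comp_sub_left]
  have hpos : 0 < ∫ x in a..b, (g (a + b - x) - f x) :=
    intervalIntegral_pos_of_pos_on (hg'.sub hf) (fun x hx => sub_pos.2 (hlt x hx)) hab
  rw [integral_sub hg' hf, hrefl] at hpos
  rw [integral_sub hf hg]
  linarith

theorem rpow_mul_rpow_sub_one_lt {c d : ℝ} (hc : 0 < c) (hcd : c < d) (q : ℝ) :
    c ^ q * d ^ (q - 1) < d ^ q * c ^ (q - 1) := by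
  have hd : 0 < d := hc.trans hcd
  have hcq : c ^ q = c * c ^ (q - 1) := by
    rw [Real.rpow_sub_one hc.ne', mul_div_cancel₀ _ hc.ne']
  have hdq : d ^ q = d * d ^ (q - 1) := by
    rw [Real.rpow_sub_one hd.ne', mul_div_cancel₀ _ hd.ne']
  have hp : 0 < c ^ (q - 1) * d ^ (q - 1) := by positivity
  calc c ^ q * d ^ (q - 1) = c * (c ^ (q - 1) * d ^ (q - 1)) := by rw [hcq]; ring
    _ < d * (c ^ (q - 1) * d ^ (q - 1)) := mul_lt_mul_of_pos_right hcd hp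
    _ = d ^ q * c ^ (q - 1) := by rw [hdq]; ring

namespace Ffun

variable {q x y d : ℝ}

def profile (q x d : ℝ) : ℝ := x ^ q * d ^ q + (1/2 - x) ^ q * (1/2 - d) ^ q

def profileDeriv (q x d : ℝ) : ℝ := q * (x ^ q * d ^ (q - 1) - (1/2 - x) ^ q * (1/2 - d) ^ (q - 1))

theorem eq_intervalIntegral (q y : ℝ) : Ffun q y = ∫ x in (0:ℝ)..1/2, profile q x |x - y| := by
  rw [Ffun, integral_Icc_eq_integral_Ioc, ← intervalIntegral.integral_of_le (by norm_num)]
  rfl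

theorem hasDerivAt_profile (hq : 1 ≤ q) (x d : ℝ) :
    HasDerivAt (profile q x) (profileDeriv q x d) d := by
  have h₁ := (Real.hasDerivAt_rpow_const (x := d) (Or.inr hq)).const_mul (x ^ q)
  have h₂ := ((Real.hasDerivAt_rpow_const (x := 1/2 - d) (Or.inr hq)).comp d
    ((hasDerivAt_id d).const_sub (1/2))).const_mul ((1/2 - x) ^ q)
  exact (h₁.add h₂).congr_deriv (by rw [profileDeriv]; ring)

theorem abs_profileDeriv_le (hq : 1 ≤ q) (hx : x ∈ Icc (0:ℝ) (1/2)) (hd : d ∈ Icc (0:ℝ) (1/2)) :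
    |profileDeriv q x d| ≤ q := by
  obtain ⟨hx₀, hx₁⟩ := hx
  obtain ⟨hd₀, hd₁⟩ := hd
  have hle : ∀ {t p : ℝ}, 0 ≤ t → t ≤ 1/2 → 0 ≤ p → t ^ p ≤ 1 := fun ht₀ ht₁ hp =>
    Real.rpow_le_one ht₀ (by linarith) hp
  rw [profileDeriv, abs_mul, abs_of_nonneg (by linarith : (0:ℝ) ≤ q)]
  refine mul_le_of_le_one_right (by linarith) (abs_sub_le_of_nonneg_of_le ?_ ?_ ?_ ?_)
  · positivity
  · exact mul_le_one₀ (hle hx₀ hx₁ (by linarith)) (by positivity) (hle hd₀ hd₁ (by linarith))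
  · have : (0:ℝ) ≤ 1/2 - x := by linarith
    have : (0:ℝ) ≤ 1/2 - d := by linarith
    positivity
  · exact mul_le_one₀ (hle (by linarith) (by linarith) (by linarith)) (by positivity)
      (hle (by linarith) (by linarith) (by linarith))

theorem lipschitzOnWith_profile (hq : 1 ≤ q) (hx : x ∈ Icc (0:ℝ) (1/2)) :
    LipschitzOnWith (Real.nnabs q) (profile q x) (Icc 0 (1/2)) :=
  (convex_Icc _ _).lipschitzOnWith_of_nnnorm_hasDerivWithin_le
    (fun d _ => (hasDerivAt_profile hq x d).hasDerivWithinAt) fun d hd => by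
      rw [← NNReal.coe_le_coe, coe_nnnorm, Real.coe_nnabs, Real.norm_eq_abs,
        abs_of_nonneg (by linarith : (0:ℝ) ≤ q)]
      exact abs_profileDeriv_le hq hx hd

theorem lipschitzOnWith_profile_abs_sub (hq : 1 ≤ q) (hx : x ∈ Icc (0:ℝ) (1/2)) :
    LipschitzOnWith (Real.nnabs q) (fun y => profile q x |x - y|) (Icc 0 (1/2)) := by
  have habs : LipschitzWith 1 fun y : ℝ => |x - y| := LipschitzWith.of_dist_le_mul fun y₁ y₂ => by
    simpa [Real.dist_eq, abs_sub_comm y₁] using abs_abs_sub_abs_le_abs_sub (x - y₁) (x - y₂)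
  have hmaps : MapsTo (fun y => |x - y|) (Icc 0 (1/2)) (Icc 0 (1/2)) := fun y hy =>
    ⟨abs_nonneg _, abs_le.2 ⟨by linarith [hx.1, hy.2], by linarith [hx.2, hy.1]⟩⟩
  have h := (lipschitzOnWith_profile hq hx).comp habs.lipschitzOnWith hmaps
  rw [mul_one] at h
  exact h

/-- The `y`-derivative of `profile q x |x - y|` for `x ≠ y`; its value at `x = y` is chosen so
that it is given by one formula on all of `Ioc 0 y`. -/
def integrandDeriv (q y x : ℝ) : ℝ :=
  if x ≤ y then profileDeriv q x (y - x) else -profileDeriv q x (x - y)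

theorem hasDerivAt_profile_abs_sub (hq : 1 ≤ q) (hxy : x ≠ y) :
    HasDerivAt (fun z => profile q x |x - z|) (integrandDeriv q y x) y := by
  have hsub := (hasDerivAt_id y).const_sub x
  rcases hxy.lt_or_gt with h | h
  · have habs := (hasDerivAt_abs_neg (sub_neg.2 h)).comp y hsub
    refine ((hasDerivAt_profile hq x _).comp y habs).congr_deriv ?_
    show profileDeriv q x |x - y| * _ = _
    rw [integrandDeriv, if_pos h.le, abs_of_neg (sub_neg.2 h), neg_sub]
    ring
  · have habs := (hasDerivAt_abs_pos (sub_pos.2 h)).comp y hsub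
    refine ((hasDerivAt_profile hq x _).comp y habs).congr_deriv ?_
    show profileDeriv q x |x - y| * _ = _
    rw [integrandDeriv, if_neg (not_le.2 h), abs_of_pos (sub_pos.2 h)]
    ring

theorem continuous_profileDeriv (hq : 1 ≤ q) {f : ℝ → ℝ} (hf : Continuous f) :
    Continuous fun x => profileDeriv q x (f x) := by
  have hq₀ : 0 ≤ q := by linarith
  have hq₁ : 0 ≤ q - 1 := by linarith
  unfold profileDeriv
  fun_prop (disch := assumption)

theorem measurable_integrandDeriv (hq : 1 ≤ q) (y : ℝ) : Measurable (integrandDeriv q y) :=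
  Measurable.ite (measurableSet_le measurable_id measurable_const)
    (continuous_profileDeriv hq (by fun_prop)).measurable
    (continuous_profileDeriv hq (by fun_prop)).measurable.neg

theorem continuous (hq : 0 ≤ q) : Continuous (Ffun q) := by
  rw [funext (eq_intervalIntegral q)]
  exact continuous_parametric_intervalIntegral_of_continuous'
    (by unfold profile; fun_prop (disch := assumption)) _ _

theorem hasDerivAt (hq : 1 ≤ q) (hy : y ∈ Ioo (0:ℝ) (1/2)) :
    IntervalIntegrable (integrandDeriv q y) volume 0 (1/2) ∧
      HasDerivAt (Ffun q) (∫ x in (0:ℝ)..1/2, integrandDeriv q y x) y := by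
  have hq₀ : 0 ≤ q := by linarith
  have hcont : ∀ z, Continuous fun x => profile q x |x - z| := fun z => by
    unfold profile; fun_prop (disch := assumption)
  rw [funext (eq_intervalIntegral q)]
  exact hasDerivAt_integral_of_dominated_loc_of_lip (bound := fun _ => q)
    (Icc_mem_nhds hy.1 hy.2) (.of_forall fun z => (hcont z).aestronglyMeasurable)
    ((hcont y).intervalIntegrable _ _) (measurable_integrandDeriv hq y).aestronglyMeasurable
    (.of_forall fun x hx => lipschitzOnWith_profile_abs_sub hq
      (Ioc_subset_Icc_self (by rwa [uIoc_of_le (by norm_num)] at hx)))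
    intervalIntegrable_const
    ((Measure.ae_ne volume y).mono fun x hxy _ => hasDerivAt_profile_abs_sub hq hxy)

theorem integral_integrandDeriv_left_neg (hq : 1 ≤ q) (hy₀ : 0 < y) (hy : y < 1/2) :
    ∫ x in (0:ℝ)..y, integrandDeriv q y x < 0 := by
  have hq₀ : 0 ≤ q := by linarith
  have hq₁ : 0 ≤ q - 1 := by linarith
  have heq : EqOn (integrandDeriv q y)
      (fun x => q * (x ^ q * (y - x) ^ (q - 1) - (1/2 - x) ^ q * (1/2 - (y - x)) ^ (q - 1)))
      (uIcc 0 y) := fun x hx => by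
    rw [uIcc_of_le hy₀.le] at hx
    rw [integrandDeriv, if_pos hx.2, profileDeriv]
  rw [integral_congr heq, intervalIntegral.integral_const_mul]
  refine mul_neg_of_pos_of_neg (by linarith) (integral_sub_neg_of_lt_reflect hy₀
    (Continuous.intervalIntegrable (by fun_prop (disch := assumption)) _ _)
    (Continuous.intervalIntegrable (by fun_prop (disch := assumption)) _ _) fun x hx => ?_)
  obtain ⟨hx₀, hxy⟩ := hx
  rw [zero_add, sub_sub_cancel]
  calc x ^ q * (y - x) ^ (q - 1) ≤ x ^ q * (1/2 - x) ^ (q - 1) := by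
        gcongr
    _ < (1/2 - (y - x)) ^ q * (1/2 - x) ^ (q - 1) := by
        have : 0 < 1/2 - x := by linarith
        gcongr
        linarith

theorem integral_integrandDeriv_right_neg (hq : 1 ≤ q) (hy₀ : 0 < y) (hy : y < 1/2) :
    ∫ x in y..1/2, integrandDeriv q y x < 0 := by
  have hq₀ : 0 ≤ q := by linarith
  have hq₁ : 0 ≤ q - 1 := by linarith
  have heq : ∀ x ∈ uIoc y (1/2), integrandDeriv q y x =
      q * ((1/2 - x) ^ q * (1/2 - (x - y)) ^ (q - 1) - x ^ q * (x - y) ^ (q - 1)) := fun x hx => by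
    rw [uIoc_of_le hy.le] at hx
    rw [integrandDeriv, if_neg (not_le.2 hx.1), profileDeriv]
    ring
  rw [integral_congr_ae (.of_forall heq), intervalIntegral.integral_const_mul]
  refine mul_neg_of_pos_of_neg (by linarith) (integral_sub_neg_of_lt_reflect hy
    (Continuous.intervalIntegrable (by fun_prop (disch := assumption)) _ _)
    (Continuous.intervalIntegrable (by fun_prop (disch := assumption)) _ _) fun x hx => ?_)
  rw [show y + 1/2 - x - y = 1/2 - x by ring, show 1/2 - (x - y) = y + 1/2 - x by ring]
  exact rpow_mul_rpow_sub_one_lt (by linarith [hx.2]) (by linarith) q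

theorem integral_integrandDeriv_neg (hq : 1 ≤ q) (hy : y ∈ Ioo (0:ℝ) (1/2))
    (hint : IntervalIntegrable (integrandDeriv q y) volume 0 (1/2)) :
    ∫ x in (0:ℝ)..1/2, integrandDeriv q y x < 0 := by
  obtain ⟨hy₀, hy⟩ := hy
  have hmem : y ∈ uIcc (0:ℝ) (1/2) := by
    rw [uIcc_of_le (by norm_num)]
    exact ⟨hy₀.le, hy.le⟩
  rw [← integral_add_adjacent_intervals (hint.mono_set (uIcc_subset_uIcc left_mem_uIcc hmem))
    (hint.mono_set (uIcc_subset_uIcc hmem right_mem_uIcc))]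
  exact add_neg (integral_integrandDeriv_left_neg hq hy₀ hy)
    (integral_integrandDeriv_right_neg hq hy₀ hy)

end Ffun

/-- for every real `q ≥ 1`, the function `F` is strictly decreasing on
`[0,1/2]`; in particular its derivative is negative at every `y ∈ (0,1/2)`. -/
theorem Ffun_strictAnti (q : ℝ) (hq : 1 ≤ q) :
    StrictAntiOn (Ffun q) (Set.Icc (0:ℝ) (1/2)) ∧
      ∀ y ∈ Set.Ioo (0:ℝ) (1/2), deriv (Ffun q) y < 0 := by
  have hderiv : ∀ y ∈ Ioo (0:ℝ) (1/2), deriv (Ffun q) y < 0 := fun y hy => by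
    obtain ⟨hint, hF⟩ := Ffun.hasDerivAt hq hy
    rw [hF.deriv]
    exact Ffun.integral_integrandDeriv_neg hq hy hint
  refine ⟨strictAntiOn_of_deriv_neg (convex_Icc _ _)
    (Ffun.continuous (by linarith)).continuousOn ?_, hderiv⟩
  rwa [interior_Icc]

end
end

section
/- For every real q ≥ 1 and every y ∈ [0, 1/2]: ∫_y^{1/2} (1/2−x)^q (1/2+y−x)^{q−1} dx − ∫_y^{1/2} x^q (x−y)^{q−1} dx = −y ∫_0^{1/2−y} z^{q−1}(z+y)^{q−1} dz. In particular the left-hand side is ≤ 0 for all y ∈ [0,1/2], and it is strictly negative for y ∈ (0,1/2). -/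
open MeasureTheory

noncomputable section

private lemma rpow_split (q t : ℝ) (hq : 1 ≤ q) (ht : 0 ≤ t) : t ^ q = t ^ (q - 1) * t := by
  rcases eq_or_lt_of_le ht with h | h
  · rw [← h, Real.zero_rpow (by linarith), mul_zero]
  · rw [← Real.rpow_add_one h.ne' (q - 1), sub_add_cancel]

/-- for every real `q ≥ 1` and `y ∈ [0,1/2]`,
`∫_y^{1/2} (1/2-x)^q (1/2+y-x)^{q-1} dx − ∫_y^{1/2} x^q (x-y)^{q-1} dx
  = −y ∫_0^{1/2−y} z^{q−1}(z+y)^{q−1} dz`;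
in particular the left-hand side is `≤ 0` for `y ∈ [0,1/2]` and `< 0` for
`y ∈ (0,1/2)`. -/
theorem g2_integral_identity (q : ℝ) (hq : 1 ≤ q) :
    ∀ y ∈ Set.Icc (0:ℝ) (1/2),
      ((∫ x in Set.Icc y (1/2), (1/2 - x) ^ q * (1/2 + y - x) ^ (q - 1)) -
        (∫ x in Set.Icc y (1/2), x ^ q * (x - y) ^ (q - 1))
        = -y * ∫ z in Set.Icc (0:ℝ) (1/2 - y), z ^ (q - 1) * (z + y) ^ (q - 1)) ∧
      ((∫ x in Set.Icc y (1/2), (1/2 - x) ^ q * (1/2 + y - x) ^ (q - 1)) -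
        (∫ x in Set.Icc y (1/2), x ^ q * (x - y) ^ (q - 1)) ≤ 0) ∧
      (y ∈ Set.Ioo (0:ℝ) (1/2) →
        (∫ x in Set.Icc y (1/2), (1/2 - x) ^ q * (1/2 + y - x) ^ (q - 1)) -
          (∫ x in Set.Icc y (1/2), x ^ q * (x - y) ^ (q - 1)) < 0) := by
  intro y hy
  obtain ⟨hy0, hy2⟩ := hy
  have hq0 : (0:ℝ) ≤ q := by linarith
  have hq1 : (0:ℝ) ≤ q - 1 := by linarith
  have hIcc : ∀ (a b : ℝ) (f : ℝ → ℝ), a ≤ b →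
      ∫ x in Set.Icc a b, f x = ∫ x in a..b, f x := by
    intro a b f h
    rw [intervalIntegral.integral_of_le h, MeasureTheory.integral_Icc_eq_integral_Ioc]
  -- continuity of the relevant functions
  have hc1 : Continuous fun x : ℝ => (1/2 - x) ^ q * (1/2 + y - x) ^ (q - 1) :=
    ((Real.continuous_rpow_const hq0).comp (by continuity)).mul
      ((Real.continuous_rpow_const hq1).comp (by continuity))
  have hc2 : Continuous fun x : ℝ => x ^ q * (x - y) ^ (q - 1) :=
    (Real.continuous_rpow_const hq0).mul
      ((Real.continuous_rpow_const hq1).comp (by continuity))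
  have hc3 : Continuous fun x : ℝ => (x - y) ^ q * x ^ (q - 1) :=
    ((Real.continuous_rpow_const hq0).comp (by continuity)).mul
      (Real.continuous_rpow_const hq1)
  have hc4 : Continuous fun z : ℝ => z ^ (q - 1) * (z + y) ^ (q - 1) :=
    (Real.continuous_rpow_const hq1).mul
      ((Real.continuous_rpow_const hq1).comp (by continuity))
  -- step A : substitution in the first integral
  have hA : (∫ x in y..(1/2:ℝ), (1/2 - x) ^ q * (1/2 + y - x) ^ (q - 1))
      = ∫ x in y..(1/2:ℝ), (x - y) ^ q * x ^ (q - 1) := by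
    have h := intervalIntegral.integral_comp_sub_left (a := y) (b := 1/2)
      (fun u : ℝ => (u - y) ^ q * u ^ (q - 1)) (1/2 + y)
    have hb1 : (1/2 + y - 1/2 : ℝ) = y := by ring
    have hb2 : (1/2 + y - y : ℝ) = 1/2 := by ring
    rw [hb1, hb2] at h
    rw [← h]
    apply intervalIntegral.integral_congr
    intro x _
    have : (1/2 + y - x - y : ℝ) = 1/2 - x := by ring
    simp only [this]
  -- main identity in interval-integral form
  have hmain : (∫ x in y..(1/2:ℝ), (1/2 - x) ^ q * (1/2 + y - x) ^ (q - 1)) -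
      (∫ x in y..(1/2:ℝ), x ^ q * (x - y) ^ (q - 1))
      = -y * ∫ z in (0:ℝ)..(1/2 - y), z ^ (q - 1) * (z + y) ^ (q - 1) := by
    rw [hA, ← intervalIntegral.integral_sub (hc3.intervalIntegrable _ _)
      (hc2.intervalIntegrable _ _)]
    have hcongr : (∫ x in y..(1/2:ℝ),
        ((x - y) ^ q * x ^ (q - 1) - x ^ q * (x - y) ^ (q - 1)))
        = ∫ x in y..(1/2:ℝ), -y * ((x - y) ^ (q - 1) * (x - y + y) ^ (q - 1)) := by
      apply intervalIntegral.integral_congr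
      intro x hx
      rw [Set.uIcc_of_le hy2] at hx
      obtain ⟨hx1, hx2⟩ := hx
      have hxy : (0:ℝ) ≤ x - y := by linarith
      have hx0 : (0:ℝ) ≤ x := by linarith
      show (x - y) ^ q * x ^ (q - 1) - x ^ q * (x - y) ^ (q - 1)
        = -y * ((x - y) ^ (q - 1) * (x - y + y) ^ (q - 1))
      rw [rpow_split q (x - y) hq hxy, rpow_split q x hq hx0]
      have : (x - y + y : ℝ) = x := by ring
      rw [this]
      ring
    rw [hcongr, intervalIntegral.integral_const_mul]
    congr 1
    have h := intervalIntegral.integral_comp_sub_right (a := y) (b := 1/2)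
      (fun z : ℝ => z ^ (q - 1) * (z + y) ^ (q - 1)) y
    have hb1 : (y - y : ℝ) = 0 := by ring
    rw [hb1] at h
    exact h
  have hJnonneg : (0:ℝ) ≤ ∫ z in (0:ℝ)..(1/2 - y), z ^ (q - 1) * (z + y) ^ (q - 1) := by
    apply intervalIntegral.integral_nonneg (by linarith)
    intro z hz
    obtain ⟨hz1, _⟩ := hz
    exact mul_nonneg (Real.rpow_nonneg hz1 _) (Real.rpow_nonneg (by linarith) _)
  have heq : (∫ x in Set.Icc y (1/2), (1/2 - x) ^ q * (1/2 + y - x) ^ (q - 1)) -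
      (∫ x in Set.Icc y (1/2), x ^ q * (x - y) ^ (q - 1))
      = -y * ∫ z in Set.Icc (0:ℝ) (1/2 - y), z ^ (q - 1) * (z + y) ^ (q - 1) := by
    rw [hIcc y (1/2) _ hy2, hIcc y (1/2) _ hy2, hIcc 0 (1/2 - y) _ (by linarith)]
    exact hmain
  refine ⟨heq, ?_, ?_⟩
  · rw [heq, hIcc 0 (1/2 - y) _ (by linarith)]
    have : (0:ℝ) ≤ y * ∫ z in (0:ℝ)..(1/2 - y), z ^ (q - 1) * (z + y) ^ (q - 1) :=
      mul_nonneg hy0 hJnonneg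
    linarith
  · intro hyo
    obtain ⟨hy0', hy2'⟩ := hyo
    rw [heq, hIcc 0 (1/2 - y) _ (by linarith)]
    have hJpos : (0:ℝ) < ∫ z in (0:ℝ)..(1/2 - y), z ^ (q - 1) * (z + y) ^ (q - 1) := by
      apply intervalIntegral.intervalIntegral_pos_of_pos_on (hc4.intervalIntegrable _ _)
      · intro z hz
        obtain ⟨hz1, _⟩ := hz
        exact mul_pos (Real.rpow_pos_of_pos hz1 _) (Real.rpow_pos_of_pos (by linarith) _)
      · linarith
    nlinarith
end
end
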